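/- arXiv:2406.13255 — 3 statements merged into one kernel-verified Lean document; each statement's English description precedes it below -/
import Mathlib

section
/- If x is a p-adic integer with |φ(x)| ≤ p^{-k}, where φ is the Monna map, then |x|_p ≤ p^{-k+1}; moreover either |x|_p ≤ p^{-k} or x = p^{k-1}. -/
open Filter Finset MeasureTheory
open scoped Classical

variable (p : ℕ) [hp : Fact p.Prime]

/-- The `i`-th base-`p` digit of a `p`-adic integer. -/
noncomputable def digit (x : ℤ_[p]) (i : ℕ) : ℕ := x.appr (i + 1) / p ^ i % p

/-- The Monna map `φ : ℤ_p → [0,1]`, `φ(Σ aᵢ pⁱ) = Σ aᵢ p^{-i-1}`. -/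
noncomputable def monna (x : ℤ_[p]) : ℝ := ∑' i : ℕ, (digit p x i : ℝ) / (p : ℝ) ^ (i + 1)

lemma digit_lt (x : ℤ_[p]) (i : ℕ) : digit p x i < p :=
  Nat.mod_lt _ hp.out.pos

lemma appr_succ_eq (x : ℤ_[p]) (n : ℕ) :
    x.appr (n + 1) = x.appr n + digit p x n * p ^ n := by
  obtain ⟨c, hc⟩ := x.dvd_appr_sub_appr n (n + 1) (Nat.le_succ n)
  have hmono := x.appr_mono (Nat.le_add_right n 1)
  have heq : x.appr (n + 1) = x.appr n + p ^ n * c := by omega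
  have hlt := x.appr_lt (n + 1)
  have hltn := x.appr_lt n
  have hcp : c < p := by
    by_contra hcge
    push_neg at hcge
    have h2 : p ^ (n + 1) ≤ p ^ n * c := by
      rw [pow_succ]; exact Nat.mul_le_mul_left _ hcge
    omega
  have hd : digit p x n = c := by
    unfold digit
    rw [heq, Nat.add_mul_div_left _ _ (pow_pos hp.out.pos n), Nat.div_eq_of_lt hltn,
      zero_add, Nat.mod_eq_of_lt hcp]
  rw [hd, heq, mul_comm]

lemma appr_eq_sum (x : ℤ_[p]) (n : ℕ) :
    x.appr n = ∑ i ∈ Finset.range n, digit p x i * p ^ i := by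
  induction n with
  | zero => simp [PadicInt.appr]
  | succ n ih => rw [appr_succ_eq, ih, Finset.sum_range_succ]

lemma monna_summable (x : ℤ_[p]) :
    Summable (fun i : ℕ => (digit p x i : ℝ) / (p : ℝ) ^ (i + 1)) := by
  have hp1 : (1 : ℝ) < p := by exact_mod_cast hp.out.one_lt
  have hp0 : (0 : ℝ) < p := by positivity
  have hgeom : Summable (fun i : ℕ => ((p : ℝ)⁻¹) ^ i) :=
    summable_geometric_of_lt_one (by positivity) (inv_lt_one_of_one_lt₀ hp1)
  refine Summable.of_nonneg_of_le (fun i => by positivity) (fun i => ?_) hgeom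
  calc (digit p x i : ℝ) / (p : ℝ) ^ (i + 1)
      ≤ (p : ℝ) / (p : ℝ) ^ (i + 1) := by
        gcongr; exact_mod_cast (digit_lt p x i).le
    _ = ((p : ℝ)⁻¹) ^ i := by
        rw [inv_pow, pow_succ']
        field_simp

theorem stmt1 (x : ℤ_[p]) (k : ℕ) (h : |monna p x| ≤ (p : ℝ) ^ (-(k : ℤ))) :
    ‖x‖ ≤ (p : ℝ) ^ (-(k : ℤ) + 1) ∧
      (‖x‖ ≤ (p : ℝ) ^ (-(k : ℤ)) ∨ x = (p : ℤ_[p]) ^ (k - 1)) := by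
  have hp1 : (1 : ℝ) < p := by exact_mod_cast hp.out.one_lt
  have hp0 : (0 : ℝ) < p := by positivity
  have hs := monna_summable p x
  have hnn : ∀ i : ℕ, 0 ≤ (digit p x i : ℝ) / (p : ℝ) ^ (i + 1) := fun i => by positivity
  have hmx : monna p x ≤ (p : ℝ) ^ (-(k : ℤ)) := (abs_le.mp h).2
  have hsum_le : ∀ s : Finset ℕ,
      ∑ i ∈ s, (digit p x i : ℝ) / (p : ℝ) ^ (i + 1) ≤ (p : ℝ) ^ (-(k : ℤ)) :=
    fun s => le_trans (Summable.sum_le_tsum s (fun i _ => hnn i) hs) hmx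
  rcases Nat.eq_zero_or_pos k with hk | hk
  · subst hk
    constructor
    · calc ‖x‖ ≤ 1 := x.norm_le_one
        _ ≤ (p : ℝ) ^ (-(0 : ℤ) + 1) := by simpa using hp1.le
    · exact Or.inl (by simpa using x.norm_le_one)
  · obtain ⟨m, rfl⟩ : ∃ m, k = m + 1 := ⟨k - 1, by omega⟩
    have hk' : (p : ℝ) ^ (-(↑(m + 1) : ℤ)) = ((p : ℝ) ^ (m + 1))⁻¹ := by
      rw [zpow_neg, zpow_natCast]
    -- digits below index m vanish
    have hdig0 : ∀ i : ℕ, i < m → digit p x i = 0 := by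
      intro i hi
      by_contra hne
      have h1 : (1 : ℝ) ≤ (digit p x i : ℝ) := by exact_mod_cast Nat.one_le_iff_ne_zero.2 hne
      have hone := hsum_le {i}
      rw [Finset.sum_singleton, hk'] at hone
      have h2 : (1 : ℝ) / (p : ℝ) ^ (i + 1) ≤ ((p : ℝ) ^ (m + 1))⁻¹ := by
        refine le_trans ?_ hone
        gcongr
      rw [one_div, inv_le_inv₀ (by positivity) (by positivity)] at h2
      have := (pow_le_pow_iff_right₀ hp1).mp h2
      omega
    -- digit at index m is at most 1
    have hdigm : digit p x m ≤ 1 := by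
      by_contra hne
      push_neg at hne
      have h1 : (2 : ℝ) ≤ (digit p x m : ℝ) := by exact_mod_cast hne
      have hone := hsum_le {m}
      rw [Finset.sum_singleton, hk'] at hone
      have h2 : (2 : ℝ) / (p : ℝ) ^ (m + 1) ≤ ((p : ℝ) ^ (m + 1))⁻¹ := by
        refine le_trans ?_ hone
        gcongr
      rw [div_le_iff₀ (by positivity), inv_mul_cancel₀ (by positivity : ((p:ℝ)^(m+1)) ≠ 0)] at h2
      linarith
    interval_cases hdm : digit p x m
    · -- case digit m = 0 : ‖x‖ ≤ p^{-k}
      have happr : x.appr (m + 1) = 0 := by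
        rw [appr_eq_sum]
        refine Finset.sum_eq_zero fun i hi => ?_
        rcases Nat.lt_succ_iff_lt_or_eq.mp (Finset.mem_range.mp hi) with hlt | rfl
        · simp [hdig0 i hlt]
        · simp [hdm]
      have hmem := x.appr_spec (m + 1)
      rw [happr] at hmem
      simp only [Nat.cast_zero, sub_zero] at hmem
      have hnorm : ‖x‖ ≤ (p : ℝ) ^ (-(↑(m + 1) : ℤ)) :=
        (PadicInt.norm_le_pow_iff_mem_span_pow x (m + 1)).mpr hmem
      refine ⟨le_trans hnorm ?_, Or.inl hnorm⟩
      exact zpow_le_zpow_right₀ hp1.le (by omega)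
    · -- case digit m = 1 : x = p^m
      have hdig0' : ∀ i : ℕ, m < i → digit p x i = 0 := by
        intro i hi
        by_contra hne
        have h1 : (1 : ℝ) ≤ (digit p x i : ℝ) := by exact_mod_cast Nat.one_le_iff_ne_zero.2 hne
        have hpair := hsum_le {m, i}
        rw [Finset.sum_pair (by omega), hdm, hk', Nat.cast_one] at hpair
        have h2 : (0 : ℝ) < (digit p x i : ℝ) / (p : ℝ) ^ (i + 1) := by positivity
        have h3 : (1 : ℝ) / (p : ℝ) ^ (m + 1) = ((p : ℝ) ^ (m + 1))⁻¹ := one_div _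
        linarith
      have hdigit : ∀ i : ℕ, i ≠ m → digit p x i = 0 := by
        intro i hi
        rcases lt_or_gt_of_ne hi with h1 | h1
        · exact hdig0 i h1
        · exact hdig0' i h1
      have happr : ∀ n : ℕ, m + 1 ≤ n → x.appr n = p ^ m := by
        intro n hn
        rw [appr_eq_sum]
        rw [Finset.sum_eq_single m (fun i _ hi => by simp [hdigit i hi])
          (fun hmem => absurd (Finset.mem_range.mpr (by omega)) hmem)]
        simp [hdm]
      have hxnorm : ∀ n : ℕ, m + 1 ≤ n → ‖x - (p : ℤ_[p]) ^ m‖ ≤ (p : ℝ) ^ (-(n : ℤ)) := by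
        intro n hn
        have hmem := x.appr_spec n
        rw [happr n hn] at hmem
        push_cast at hmem
        exact (PadicInt.norm_le_pow_iff_mem_span_pow _ n).mpr hmem
      have hzero : x - (p : ℤ_[p]) ^ m = 0 := by
        rw [← norm_eq_zero]
        refine le_antisymm ?_ (norm_nonneg _)
        have ht : Tendsto (fun n : ℕ => (p : ℝ) ^ (-(n : ℤ))) atTop (nhds 0) := by
          have : (fun n : ℕ => (p : ℝ) ^ (-(n : ℤ))) = fun n : ℕ => ((p : ℝ)⁻¹) ^ n := by
            funext n
            rw [inv_pow, zpow_neg, zpow_natCast]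
          rw [this]
          exact tendsto_pow_atTop_nhds_zero_of_lt_one (by positivity)
            (inv_lt_one_of_one_lt₀ hp1)
        exact ge_of_tendsto ht (eventually_atTop.2 ⟨m + 1, fun n hn => hxnorm n hn⟩)
      have hx : x = (p : ℤ_[p]) ^ m := by
        have := sub_eq_zero.mp hzero
        exact this
      constructor
      · rw [hx, PadicInt.norm_p_pow]
        apply le_of_eq
        congr 1
        push_cast
        ring
      · right
        simpa using hx
end

section
/- The sequence of natural numbers (n)_{n≥1}, viewed as elements of ℤ_p, has α-Poissonian pair correlations for every 0 < α < 1. -/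
open Filter Finset MeasureTheory
open scoped Classical

variable (p : ℕ) [hp : Fact p.Prime]

/-- Distance of a real number to its nearest integer. -/
noncomputable def nearestDist (x : ℝ) : ℝ := |x - round x|

/-- A real sequence in `[0,1)` has `α`-Poissonian pair correlations. -/
noncomputable def realPPC (α : ℝ) (y : ℕ → ℝ) : Prop :=
  ∀ s : ℝ, 0 ≤ s → Tendsto (fun N : ℕ =>
    (((Finset.Icc 1 N ×ˢ Finset.Icc 1 N).filter
      (fun q : ℕ × ℕ => q.1 ≠ q.2 ∧ nearestDist (y q.1 - y q.2) ≤ s / (N : ℝ) ^ α)).card : ℝ)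
      / (N : ℝ) ^ (2 - α)) atTop (nhds (2 * s))

/-- A `p`-adic sequence has `α`-Poissonian pair correlations with respect to the
(normalized) Haar measure `μ` on `ℤ_p`. -/
noncomputable def padicPPC [MeasurableSpace ℤ_[p]] (μ : Measure ℤ_[p]) (α : ℝ)
    (x : ℕ → ℤ_[p]) : Prop :=
  ∀ s : ℝ, 0 < s → Tendsto (fun N : ℕ =>
    (((Finset.Icc 1 N ×ˢ Finset.Icc 1 N).filter
      (fun q : ℕ × ℕ => q.1 ≠ q.2 ∧ ‖x q.1 - x q.2‖ ≤ s / (N : ℝ) ^ α)).card : ℝ)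
      / ((N : ℝ) ^ 2 * (μ {z : ℤ_[p] | ‖z‖ ≤ s / (N : ℝ) ^ α}).toReal)) atTop (nhds 1)

/-- The `i`-th base-`p` digit of a real number in `[0,1)`. -/
noncomputable def realDigit (y : ℝ) (i : ℕ) : ℕ := (⌊y * (p : ℝ) ^ (i + 1)⌋ % p).toNat

/-- The inverse Monna map `φ⁻¹ : [0,1) → ℤ_p`, built from the base-`p` digits of `y`
(the floor-digit expansion, which has `aᵢ ≠ p-1` infinitely often). -/
noncomputable def invMonna (y : ℝ) : ℤ_[p] := ∑' i : ℕ, (realDigit p y i : ℤ_[p]) * (p : ℤ_[p]) ^ i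

/-!
A closed ball of radius `ε ∈ (0, 1]` in `ℤ_p` is the ideal `p^n ℤ_p` for the `n` with
`p^{-n} ≤ ε < p^{1-n}`; being an additive subgroup of index `p^n`, it has Haar measure `p^{-n}`.
For naturals, `‖i - j‖ ≤ ε` means `i ≡ j [MOD p^n]`, and every residue class meets `{1, …, N}`
in `N / p^n + O(1)` points, so the number of such pairs `i ≠ j` is `N² / p^n + O(N)`. The
relative error is `O(p^n / N) = O(p / (ε N))`, which for `ε = s / N^α` is `O(N^{α-1}) → 0`.
-/

open scoped ENNReal Topology

namespace Nat

theorem abs_card_Icc_filter_modEq_sub_le (N : ℕ) {m : ℕ} (hm : 0 < m) (v : ℕ) :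
    |(#{j ∈ Icc 1 N | j ≡ v [MOD m]} : ℝ) - N / m| ≤ 1 := by
  have key : |(#{j ∈ Icc 1 N | j ≡ v [MOD m]} : ℚ) - N / m| ≤ 1 := by
    set a : ℚ := (N - v) / m
    set b : ℚ := ((0 : ℕ) - v) / m
    have hcard : (#{j ∈ Icc 1 N | j ≡ v [MOD m]} : ℚ) = ((max (⌊a⌋ - ⌊b⌋) 0 : ℤ) : ℚ) := by
      rw [show Icc 1 N = Ioc 0 N from Icc_add_one_left_eq_Ioc 0 N,
        ← Ioc_filter_modEq_card 0 N hm v, Int.cast_natCast]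
    have hab : a - b = N / m := by simp only [a, b, Nat.cast_zero]; ring
    have hN : (0 : ℚ) ≤ N / m := by positivity
    calc |(#{j ∈ Icc 1 N | j ≡ v [MOD m]} : ℚ) - N / m|
        = |max ((⌊a⌋ - ⌊b⌋ : ℤ) : ℚ) 0 - max (N / m : ℚ) 0| := by
          rw [hcard, max_eq_left hN]; push_cast; rfl
      _ ≤ |((⌊a⌋ - ⌊b⌋ : ℤ) : ℚ) - N / m| := abs_max_sub_max_le_abs _ _ _
      _ ≤ 1 := by
        rw [abs_sub_le_iff, ← hab]
        push_cast
        constructor <;> linarith [Int.floor_le a, Int.floor_le b, Int.lt_floor_add_one a,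
          Int.lt_floor_add_one b]
  simpa using (Rat.cast_le (K := ℝ)).mpr key

theorem abs_card_offDiag_modEq_sub_le (N : ℕ) {m : ℕ} (hm : 0 < m) :
    |(#{q ∈ Icc 1 N ×ˢ Icc 1 N | q.1 ≠ q.2 ∧ q.1 ≡ q.2 [MOD m]} : ℝ) - N ^ 2 / m| ≤ 2 * N := by
  have hrow : ∀ i ∈ Icc 1 N,
      #{j ∈ Icc 1 N | i ≠ j ∧ i ≡ j [MOD m]} + 1 = #{j ∈ Icc 1 N | j ≡ i [MOD m]} := by
    intro i hi
    have : {j ∈ Icc 1 N | i ≠ j ∧ i ≡ j [MOD m]} = {j ∈ Icc 1 N | j ≡ i [MOD m]}.erase i := by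
      ext j
      simp only [mem_filter, mem_erase, ne_comm, ModEq.comm]
      tauto
    rw [this]
    exact card_erase_add_one (mem_filter.2 ⟨hi, ModEq.refl i⟩)
  have hsum : (#{q ∈ Icc 1 N ×ˢ Icc 1 N | q.1 ≠ q.2 ∧ q.1 ≡ q.2 [MOD m]} : ℝ) =
      ∑ i ∈ Icc 1 N, ((#{j ∈ Icc 1 N | j ≡ i [MOD m]} : ℝ) - 1) := by
    rw [card_filter, sum_product]
    push_cast
    refine sum_congr rfl fun i hi => ?_
    rw [← hrow i hi, card_filter]
    push_cast
    ring
  calc |(#{q ∈ Icc 1 N ×ˢ Icc 1 N | q.1 ≠ q.2 ∧ q.1 ≡ q.2 [MOD m]} : ℝ) - N ^ 2 / m|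
      = |∑ i ∈ Icc 1 N, (((#{j ∈ Icc 1 N | j ≡ i [MOD m]} : ℝ) - N / m) - 1)| := by
        simp only [hsum, sum_sub_distrib, sum_const, Nat.card_Icc, add_tsub_cancel_right, nsmul_eq_mul]
        ring_nf
    _ ≤ ∑ i ∈ Icc 1 N, (1 + 1 : ℝ) := by
        refine (abs_sum_le_sum_abs _ _).trans (sum_le_sum fun i _ => ?_)
        exact (abs_sub _ _).trans (by simpa using abs_card_Icc_filter_modEq_sub_le N hm i)
    _ = 2 * N := by rw [sum_const, Nat.card_Icc, add_tsub_cancel_right, nsmul_eq_mul]; ring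

end Nat

namespace PadicInt

theorem pow_mul_measure_norm_le_pow [MeasurableSpace ℤ_[p]] [BorelSpace ℤ_[p]]
    (μ : Measure ℤ_[p]) [μ.IsAddLeftInvariant] (n : ℕ) :
    (p : ℝ≥0∞) ^ n * μ {z : ℤ_[p] | ‖z‖ ≤ (p : ℝ) ^ (-n : ℤ)} = μ Set.univ := by
  set H := (toZModPow n : ℤ_[p] →+* ZMod (p ^ n)).toAddMonoidHom.ker
  have hH : (H : Set ℤ_[p]) = {z | ‖z‖ ≤ (p : ℝ) ^ (-n : ℤ)} := by
    ext z
    change _ ↔ ‖z‖ ≤ _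
    rw [norm_le_pow_iff_mem_span_pow, ← ker_toZModPow]
    rfl
  have hindex : H.index = p ^ n := by
    rw [AddSubgroup.index_ker, AddMonoidHom.range_eq_top.2 (ZMod.ringHom_surjective _)]
    simp
  have : H.FiniteIndex := ⟨by rw [hindex]; exact pow_ne_zero n hp.out.ne_zero⟩
  have hmeas : MeasurableSet (H : Set ℤ_[p]) := by
    rw [hH]
    exact (isClosed_le continuous_norm continuous_const).measurableSet
  have := H.index_mul_measure hmeas μ
  rwa [hindex, hH, Nat.cast_pow] at this

theorem exists_norm_le_iff_norm_le_pow {ε : ℝ} (hε0 : 0 < ε) (hε1 : ε ≤ 1) :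
    ∃ n : ℕ, (∀ z : ℤ_[p], ‖z‖ ≤ ε ↔ ‖z‖ ≤ (p : ℝ) ^ (-n : ℤ)) ∧ (p : ℝ) ^ n * ε < p := by
  have hp1 := hp.out.one_lt
  obtain ⟨n, hn⟩ : ∃ n : ℕ, Int.log p ε = -n := ⟨_, Int.log_of_right_le_one p hε1⟩
  have hle := Int.zpow_log_le_self hp1 hε0
  have hlt := Int.lt_zpow_succ_log_self hp1 ε
  rw [hn] at hle hlt
  refine ⟨n, fun z => ⟨fun h => ?_, fun h => h.trans hle⟩, ?_⟩
  · exact (norm_le_pow_iff_norm_lt_pow_add_one z _).2 (h.trans_lt hlt)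
  · have hp0 : (0 : ℝ) < p := by exact_mod_cast hp.out.pos
    calc (p : ℝ) ^ n * ε < p ^ n * p ^ (-n + 1 : ℤ) := by gcongr
      _ = p := by rw [zpow_add₀ hp0.ne', zpow_neg, zpow_natCast, zpow_one]; field_simp

theorem norm_natCast_sub_le_pow_iff_modEq {i j n : ℕ} :
    ‖(i : ℤ_[p]) - j‖ ≤ (p : ℝ) ^ (-n : ℤ) ↔ i ≡ j [MOD p ^ n] := by
  rw [Nat.ModEq.comm, Nat.modEq_iff_dvd, Nat.cast_pow, ← norm_int_le_pow_iff_dvd]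
  push_cast
  rfl

theorem abs_card_pairs_div_sub_one_le [MeasurableSpace ℤ_[p]] [BorelSpace ℤ_[p]]
    (μ : Measure ℤ_[p]) [μ.IsAddLeftInvariant] (hμ : μ Set.univ = 1) {ε : ℝ} (hε0 : 0 < ε)
    (hε1 : ε ≤ 1) {N : ℕ} (hN : 0 < N) :
    |(#{q ∈ Icc 1 N ×ˢ Icc 1 N | q.1 ≠ q.2 ∧ ‖(q.1 : ℤ_[p]) - q.2‖ ≤ ε} : ℝ)
        / (N ^ 2 * (μ {z : ℤ_[p] | ‖z‖ ≤ ε}).toReal) - 1| ≤ 2 * p / (ε * N) := by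
  obtain ⟨n, hball, hpn⟩ := exists_norm_le_iff_norm_le_pow p hε0 hε1
  have hcard : #{q ∈ Icc 1 N ×ˢ Icc 1 N | q.1 ≠ q.2 ∧ ‖(q.1 : ℤ_[p]) - q.2‖ ≤ ε} =
      #{q ∈ Icc 1 N ×ˢ Icc 1 N | q.1 ≠ q.2 ∧ q.1 ≡ q.2 [MOD p ^ n]} := by
    simp only [hball, norm_natCast_sub_le_pow_iff_modEq]
  have hmeas : (μ {z : ℤ_[p] | ‖z‖ ≤ ε}).toReal = ((p ^ n : ℕ) : ℝ)⁻¹ := by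
    have hB : {z : ℤ_[p] | ‖z‖ ≤ ε} = {z | ‖z‖ ≤ (p : ℝ) ^ (-n : ℤ)} := Set.ext hball
    have h : μ {z | ‖z‖ ≤ (p : ℝ) ^ (-n : ℤ)} * (p : ℝ≥0∞) ^ n = 1 := by
      rw [mul_comm, pow_mul_measure_norm_le_pow p μ n, hμ]
    rw [hB, ENNReal.eq_inv_of_mul_eq_one_left h, ENNReal.toReal_inv]
    simp
  rw [hcard, hmeas]
  set m := p ^ n
  have hm : 0 < m := pow_pos hp.out.pos n
  calc _ = |(#{q ∈ Icc 1 N ×ˢ Icc 1 N | q.1 ≠ q.2 ∧ q.1 ≡ q.2 [MOD m]} : ℝ) - N ^ 2 / m|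
        * (m / N ^ 2) := by
        rw [← abs_of_pos (by positivity : (0 : ℝ) < m / N ^ 2), ← abs_mul]
        congr 1
        field_simp
    _ ≤ 2 * N * (m / N ^ 2) := by
        gcongr
        exact Nat.abs_card_offDiag_modEq_sub_le N hm
    _ = 2 * (p ^ n * ε) / (ε * N) := by
        simp only [m, Nat.cast_pow]
        field_simp
    _ ≤ 2 * p / (ε * N) := by gcongr

end PadicInt

theorem stmt14 [MeasurableSpace ℤ_[p]] [BorelSpace ℤ_[p]]
    (μ : Measure ℤ_[p]) [μ.IsAddHaarMeasure] (hμ : μ Set.univ = 1)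
    (α : ℝ) (hα0 : 0 < α) (hα1 : α < 1) :
    padicPPC p μ α (fun n => (n : ℤ_[p])) := by
  intro s hs
  have hNα : Tendsto (fun N : ℕ => (N : ℝ) ^ α) atTop atTop :=
    (tendsto_rpow_atTop hα0).comp tendsto_natCast_atTop_atTop
  have hε : Tendsto (fun N : ℕ => s / (N : ℝ) ^ α) atTop (𝓝 0) :=
    tendsto_const_nhds.div_atTop hNα
  have hεN : Tendsto (fun N : ℕ => s / (N : ℝ) ^ α * N) atTop atTop := by
    refine (((tendsto_rpow_atTop (sub_pos.2 hα1)).comp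
      tendsto_natCast_atTop_atTop).const_mul_atTop hs).congr' ?_
    filter_upwards [eventually_gt_atTop 0] with N hN
    rw [Function.comp_apply, Real.rpow_sub (by positivity), Real.rpow_one]
    ring
  rw [tendsto_iff_norm_sub_tendsto_zero]
  refine squeeze_zero' (Eventually.of_forall fun _ => norm_nonneg _) ?_
    (tendsto_const_nhds.div_atTop hεN : Tendsto (fun N : ℕ => 2 * p / (s / (N : ℝ) ^ α * N)) _ _)
  filter_upwards [hε.eventually (ge_mem_nhds one_pos), eventually_gt_atTop 0] with N hε1 hN
  exact PadicInt.abs_card_pairs_div_sub_one_le p μ hμ (by positivity) hε1 hN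
end

section
/- The sequence of natural numbers (n)_{n≥1} ⊂ ℤ_p does not have 1-Poissonian pair correlations. -/
open Filter Finset MeasureTheory
open scoped Classical

variable (p : ℕ) [hp : Fact p.Prime]

/-! Along `N = p ^ k` the sequence `(n)` has no close pairs at scale `s = 1`: two distinct integers
in `[1, p ^ k]` differ by less than `p ^ k`, so `p ^ k` cannot divide their difference. The pair
count therefore vanishes on this subsequence, and the normalized count tends to `0`, not `1`. -/

theorem PadicInt.eq_zero_of_norm_intCast_le_of_abs_lt {a : ℤ} {k : ℕ}
    (hnorm : ‖(a : ℤ_[p])‖ ≤ (p : ℝ) ^ (-(k : ℤ))) (habs : |a| < (p : ℤ) ^ k) : a = 0 :=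
  Int.eq_zero_of_abs_lt_dvd (PadicInt.norm_int_le_pow_iff_dvd.mp hnorm) habs

theorem closePairs_natCast_pow_eq_empty (k : ℕ) :
    ((Finset.Icc 1 (p ^ k) ×ˢ Finset.Icc 1 (p ^ k)).filter
      (fun q : ℕ × ℕ => q.1 ≠ q.2 ∧
        ‖((q.1 : ℤ_[p]) - (q.2 : ℤ_[p]))‖ ≤ 1 / ((p ^ k : ℕ) : ℝ) ^ (1 : ℝ))) = ∅ := by
  rw [Finset.filter_eq_empty_iff]
  rintro ⟨i, j⟩ hq ⟨hne, hclose⟩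
  simp only [Finset.mem_product, Finset.mem_Icc] at hq
  have hradius : (1 : ℝ) / ((p ^ k : ℕ) : ℝ) ^ (1 : ℝ) = (p : ℝ) ^ (-(k : ℤ)) := by
    rw [Real.rpow_one, zpow_neg, zpow_natCast, one_div]
    push_cast
    rfl
  have hcast : (i : ℤ_[p]) - (j : ℤ_[p]) = (((i : ℤ) - j : ℤ) : ℤ_[p]) := by push_cast; ring
  have habs : |(i : ℤ) - j| < (p : ℤ) ^ k := by
    rw [abs_sub_lt_iff]
    constructor <;> zify at hq <;> linarith
  rw [hcast, hradius] at hclose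
  have := PadicInt.eq_zero_of_norm_intCast_le_of_abs_lt p hclose habs
  omega

theorem stmt15 [MeasurableSpace ℤ_[p]]
    (μ : Measure ℤ_[p]) :
    ¬ padicPPC p μ 1 (fun n => (n : ℤ_[p])) := by
  intro h
  have hsubseq := (h 1 one_pos).comp (tendsto_pow_atTop_atTop_of_one_lt hp.out.one_lt)
  have hzero : Tendsto (fun _ : ℕ => (0 : ℝ)) atTop (nhds 1) := by
    refine hsubseq.congr fun k => ?_
    simp only [Function.comp_apply, closePairs_natCast_pow_eq_empty p k, Finset.card_empty,
      Nat.cast_zero, zero_div]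
  exact zero_ne_one (tendsto_nhds_unique tendsto_const_nhds hzero)
end
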